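/- Let u be a Schwartz-class solution of the derivative nonlinear Schrödinger equation i∂_t u + ∂_x² u = −i∂_x(|u|² u). Then the momentum P(u(t)) = Im ∫_ℝ \overline{u}(t,x) ∂_x u(t,x) dx + (1/2) ∫_ℝ |u(t,x)|⁴ dx is independent of t. -/

import Mathlib

open MeasureTheory Complex

/-- A Schwartz-class solution of the derivative nonlinear Schrödinger equation
`i∂_t u + ∂_x² u = −i∂_x(|u|²u)`: `u` is smooth in both variables, `u(t,·)` is Schwartz
for every `t`, all space-time derivatives decay rapidly in `x` uniformly for `t` in
compact sets, and the equation holds pointwise. -/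
def IsDNLSSolution (u : ℝ → ℝ → ℂ) : Prop :=
  ContDiff ℝ (⊤ : ℕ∞) (fun q : ℝ × ℝ => u q.1 q.2) ∧
  (∀ t : ℝ, ∃ φ : SchwartzMap ℝ ℂ, ∀ x : ℝ, φ x = u t x) ∧
  (∀ (i j k : ℕ) (K : Set ℝ), IsCompact K → ∃ C : ℝ, ∀ t ∈ K, ∀ x : ℝ,
    |x| ^ k * ‖iteratedDeriv i (fun s => iteratedDeriv j (fun y => u s y) x) t‖ ≤ C) ∧
  (∀ t x : ℝ,
    Complex.I * deriv (fun s => u s x) t + deriv (deriv (u t)) x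
      = -Complex.I * deriv (fun y => (‖u t y‖ : ℂ) ^ 2 * u t y) x)

/-- The DNLS momentum functional
`P(v) = Im ∫ conj(v) v_x dx + (1/2) ∫ |v|⁴ dx`. -/
noncomputable def momentum (v : ℝ → ℂ) : ℝ :=
  (∫ x : ℝ, (starRingEnd ℂ) (v x) * deriv v x).im + (1 / 2) * ∫ x : ℝ, ‖v x‖ ^ 4

/-!
Along a solution, the momentum density `p = Im (ū u_x) + ½ |u|⁴` obeys the local conservation
law `∂ₜ p = ∂ₓ Φ` with flux `Φ = Re (ū u_xx) - |u_x|² - 3 |u|² Im (ū u_x) - |u|⁶`: this is a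
polynomial identity in `u, u_x, u_xx, u_xxx` once `u_t` and `u_xt = ∂ₓ u_t` are eliminated with
the equation. Uniform decay of the derivatives allows differentiating `P(t) = ∫ p(t, x) dx` under
the integral sign, and `∫ ∂ₓ Φ dx = 0` since `Φ` vanishes at `±∞`; hence `P' = 0`.
-/

open Filter Topology Function
open scoped ContDiff

section ComplexParts

variable {h : ℝ → ℂ} {h' : ℂ} {x : ℝ}

theorem HasDerivAt.complexConj (H : HasDerivAt h h' x) :
    HasDerivAt (fun y => starRingEnd ℂ (h y)) (starRingEnd ℂ h') x := by
  simpa only [starRingEnd_apply] using H.star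

theorem HasDerivAt.complexRe (H : HasDerivAt h h' x) : HasDerivAt (fun y => (h y).re) h'.re x :=
  reCLM.hasFDerivAt.comp_hasDerivAt x H

theorem HasDerivAt.complexIm (H : HasDerivAt h h' x) : HasDerivAt (fun y => (h y).im) h'.im x :=
  imCLM.hasFDerivAt.comp_hasDerivAt x H

end ComplexParts

namespace DNLS

noncomputable def pdx (g : ℝ × ℝ → ℂ) : ℝ × ℝ → ℂ := fun q => fderiv ℝ g q (0, 1)

noncomputable def pdt (g : ℝ × ℝ → ℂ) : ℝ × ℝ → ℂ := fun q => fderiv ℝ g q (1, 0)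

section PartialDerivatives

variable {g : ℝ × ℝ → ℂ}

theorem contDiff_pdx (hg : ContDiff ℝ ∞ g) : ContDiff ℝ ∞ (pdx g) :=
  (hg.fderiv_right (by norm_cast)).clm_apply contDiff_const

theorem contDiff_pdt (hg : ContDiff ℝ ∞ g) : ContDiff ℝ ∞ (pdt g) :=
  (hg.fderiv_right (by norm_cast)).clm_apply contDiff_const

theorem contDiff_iterate_pdx (hg : ContDiff ℝ ∞ g) (j : ℕ) : ContDiff ℝ ∞ (pdx^[j] g) :=
  Iterate.rec _ hg (fun _ => contDiff_pdx) j

theorem contDiff_iterate_pdt (hg : ContDiff ℝ ∞ g) (i : ℕ) : ContDiff ℝ ∞ (pdt^[i] g) :=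
  Iterate.rec _ hg (fun _ => contDiff_pdt) i

theorem hasDerivAt_pdx (hg : Differentiable ℝ g) (t x : ℝ) :
    HasDerivAt (fun y => g (t, y)) (pdx g (t, x)) x :=
  (hg (t, x)).hasFDerivAt.comp_hasDerivAt x ((hasDerivAt_const x t).prodMk (hasDerivAt_id x))

theorem hasDerivAt_pdt (hg : Differentiable ℝ g) (t x : ℝ) :
    HasDerivAt (fun s => g (s, x)) (pdt g (t, x)) t :=
  (hg (t, x)).hasFDerivAt.comp_hasDerivAt t ((hasDerivAt_id t).prodMk (hasDerivAt_const t x))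

theorem pdx_pdt_comm (hg : ContDiff ℝ ∞ g) (q : ℝ × ℝ) : pdx (pdt g) q = pdt (pdx g) q := by
  have hdiff : DifferentiableAt ℝ (fderiv ℝ g) q :=
    ((hg.fderiv_right (m := ∞) (by norm_cast)).differentiable (by simp)) q
  have hsecond (v w : ℝ × ℝ) :
      fderiv ℝ (fun p => fderiv ℝ g p v) q w = fderiv ℝ (fderiv ℝ g) q w v := by
    rw [fderiv_clm_apply hdiff (differentiableAt_const _)]
    simp
  change fderiv ℝ (fun p => fderiv ℝ g p (1, 0)) q (0, 1)
    = fderiv ℝ (fun p => fderiv ℝ g p (0, 1)) q (1, 0)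
  rw [hsecond, hsecond]
  exact hg.contDiffAt.isSymmSndFDerivAt
    (by rw [minSmoothness_of_isRCLikeNormedField]; norm_cast) _ _

theorem iteratedDeriv_slice_x (hg : ContDiff ℝ ∞ g) (j : ℕ) (t : ℝ) :
    iteratedDeriv j (fun y => g (t, y)) = fun y => pdx^[j] g (t, y) := by
  induction j with
  | zero => rfl
  | succ j ih =>
    ext x
    rw [iteratedDeriv_succ, ih, iterate_succ_apply']
    exact (hasDerivAt_pdx ((contDiff_iterate_pdx hg j).differentiable (by simp)) t x).deriv

theorem iteratedDeriv_slice_t (hg : ContDiff ℝ ∞ g) (i : ℕ) (x : ℝ) :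
    iteratedDeriv i (fun s => g (s, x)) = fun s => pdt^[i] g (s, x) := by
  induction i with
  | zero => rfl
  | succ i ih =>
    ext t
    rw [iteratedDeriv_succ, ih, iterate_succ_apply']
    exact (hasDerivAt_pdt ((contDiff_iterate_pdt hg i).differentiable (by simp)) t x).deriv

theorem iteratedDeriv_slice (hg : ContDiff ℝ ∞ g) (i j : ℕ) (t x : ℝ) :
    iteratedDeriv i (fun s => iteratedDeriv j (fun y => g (s, y)) x) t
      = pdt^[i] (pdx^[j] g) (t, x) := by
  simp only [iteratedDeriv_slice_x hg, iteratedDeriv_slice_t (contDiff_iterate_pdx hg j)]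

end PartialDerivatives

/-- The weight `(1 + x²)⁻¹` is integrable and tends to `0` at `±∞`, which is all the decay the
argument uses. -/
def InvSqDecay {E : Type*} [Norm E] (G : ℝ × ℝ → E) : Prop :=
  ∀ K : Set ℝ, IsCompact K → ∃ C : ℝ, ∀ t ∈ K, ∀ x : ℝ, ‖G (t, x)‖ ≤ C * (1 + x ^ 2)⁻¹

theorem inv_one_add_sq_le_one (x : ℝ) : (1 + x ^ 2)⁻¹ ≤ 1 :=
  inv_le_one_of_one_le₀ (by nlinarith [sq_nonneg x])

theorem tendsto_inv_one_add_sq_cocompact :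
    Tendsto (fun x : ℝ => (1 + x ^ 2)⁻¹) (cocompact ℝ) (𝓝 0) := by
  have hnorm := tendsto_norm_cocompact_atTop (E := ℝ)
  refine (tendsto_atTop_add_const_left _ 1
    ((tendsto_pow_atTop two_ne_zero).comp hnorm)).inv_tendsto_atTop.congr fun x => ?_
  simp

namespace InvSqDecay

theorem of_norm_le {E F : Type*} [Norm E] [SeminormedAddCommGroup F] {H : ℝ × ℝ → E}
    {G : ℝ × ℝ → F} (hG : InvSqDecay G) (c : ℝ) (hle : ∀ q, ‖H q‖ ≤ c * ‖G q‖) :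
    InvSqDecay H := by
  intro K hK
  obtain ⟨C, hC⟩ := hG K hK
  refine ⟨|c| * C, fun t ht x => ?_⟩
  calc ‖H (t, x)‖ ≤ |c| * ‖G (t, x)‖ :=
        (hle _).trans (mul_le_mul_of_nonneg_right (le_abs_self c) (norm_nonneg _))
    _ ≤ |c| * (C * (1 + x ^ 2)⁻¹) := by gcongr; exact hC t ht x
    _ = |c| * C * (1 + x ^ 2)⁻¹ := by ring

section Algebra

variable {E : Type*} {G H : ℝ × ℝ → E}

theorem add [SeminormedAddCommGroup E] (hG : InvSqDecay G) (hH : InvSqDecay H) :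
    InvSqDecay (fun q => G q + H q) := by
  intro K hK
  obtain ⟨C₁, hC₁⟩ := hG K hK
  obtain ⟨C₂, hC₂⟩ := hH K hK
  refine ⟨C₁ + C₂, fun t ht x => ?_⟩
  calc ‖G (t, x) + H (t, x)‖ ≤ ‖G (t, x)‖ + ‖H (t, x)‖ := norm_add_le _ _
    _ ≤ C₁ * (1 + x ^ 2)⁻¹ + C₂ * (1 + x ^ 2)⁻¹ := add_le_add (hC₁ t ht x) (hC₂ t ht x)
    _ = (C₁ + C₂) * (1 + x ^ 2)⁻¹ := by ring

theorem neg [SeminormedAddCommGroup E] (hG : InvSqDecay G) : InvSqDecay (fun q => -G q) :=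
  hG.of_norm_le 1 fun q => by simp

theorem sub [SeminormedAddCommGroup E] (hG : InvSqDecay G) (hH : InvSqDecay H) :
    InvSqDecay (fun q => G q - H q) := by
  simpa only [sub_eq_add_neg] using hG.add hH.neg

theorem const_mul [NonUnitalSeminormedRing E] (hG : InvSqDecay G) (c : E) :
    InvSqDecay (fun q => c * G q) :=
  hG.of_norm_le ‖c‖ fun _ => norm_mul_le _ _

theorem mul [NonUnitalSeminormedRing E] (hG : InvSqDecay G) (hH : InvSqDecay H) :
    InvSqDecay (fun q => G q * H q) := by
  intro K hK
  obtain ⟨C₁, hC₁⟩ := hG K hK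
  obtain ⟨C₂, hC₂⟩ := hH K hK
  refine ⟨C₁ * C₂, fun t ht x => ?_⟩
  have hw : 0 < (1 + x ^ 2)⁻¹ := by positivity
  have hC₁0 : 0 ≤ C₁ := nonneg_of_mul_nonneg_left ((norm_nonneg _).trans (hC₁ t ht x)) hw
  calc ‖G (t, x) * H (t, x)‖ ≤ ‖G (t, x)‖ * ‖H (t, x)‖ := norm_mul_le _ _
    _ ≤ C₁ * 1 * (C₂ * (1 + x ^ 2)⁻¹) :=
      mul_le_mul ((hC₁ t ht x).trans (by gcongr; exact inv_one_add_sq_le_one x)) (hC₂ t ht x)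
        (norm_nonneg _) (by simpa using hC₁0)
    _ = C₁ * C₂ * (1 + x ^ 2)⁻¹ := by ring

theorem pow [SeminormedRing E] (hG : InvSqDecay G) {n : ℕ} (hn : n ≠ 0) :
    InvSqDecay (fun q => G q ^ n) := by
  induction n with
  | zero => exact absurd rfl hn
  | succ n ih =>
    rcases eq_or_ne n 0 with rfl | hn'
    · simpa using hG
    · simpa only [pow_succ] using (ih hn').mul hG

end Algebra

theorem conj {G : ℝ × ℝ → ℂ} (hG : InvSqDecay G) : InvSqDecay (fun q => starRingEnd ℂ (G q)) :=
  hG.of_norm_le 1 fun q => by simp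

theorem re {G : ℝ × ℝ → ℂ} (hG : InvSqDecay G) : InvSqDecay (fun q => (G q).re) :=
  hG.of_norm_le 1 fun q => by simpa using abs_re_le_norm (G q)

theorem im {G : ℝ × ℝ → ℂ} (hG : InvSqDecay G) : InvSqDecay (fun q => (G q).im) :=
  hG.of_norm_le 1 fun q => by simpa using abs_im_le_norm (G q)

section Analysis

variable {E : Type*} [NormedAddCommGroup E] {G : ℝ × ℝ → E}

theorem integrable (hG : InvSqDecay G) (hc : Continuous G) (t : ℝ) :
    Integrable (fun x => G (t, x)) := by
  obtain ⟨C, hC⟩ := hG {t} isCompact_singleton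
  exact (integrable_inv_one_add_sq.const_mul C).mono'
    (hc.comp (Continuous.prodMk_right t)).aestronglyMeasurable
    (ae_of_all _ fun x => hC t rfl x)

theorem tendsto_cocompact (hG : InvSqDecay G) (t : ℝ) :
    Tendsto (fun x => G (t, x)) (cocompact ℝ) (𝓝 0) := by
  obtain ⟨C, hC⟩ := hG {t} isCompact_singleton
  refine squeeze_zero_norm (fun x => hC t rfl x) ?_
  simpa using tendsto_inv_one_add_sq_cocompact.const_mul C

end Analysis

end InvSqDecay

theorem hasDerivAt_integral_of_invSqDecay {E : Type*} [NormedAddCommGroup E] [NormedSpace ℝ E]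
    {F F' : ℝ × ℝ → E} (hF : InvSqDecay F) (hF' : InvSqDecay F') (hFc : Continuous F)
    (hF'c : Continuous F') (hderiv : ∀ t x, HasDerivAt (fun s => F (s, x)) (F' (t, x)) t)
    (t₀ : ℝ) : HasDerivAt (fun t => ∫ x, F (t, x)) (∫ x, F' (t₀, x)) t₀ := by
  obtain ⟨C, hC⟩ := hF' (Set.Icc (t₀ - 1) (t₀ + 1)) isCompact_Icc
  exact (hasDerivAt_integral_of_dominated_loc_of_deriv_le (bound := fun x => C * (1 + x ^ 2)⁻¹)
    (Icc_mem_nhds (by linarith) (by linarith))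
    (Eventually.of_forall fun t => (hFc.comp (Continuous.prodMk_right t)).aestronglyMeasurable)
    (hF.integrable hFc t₀) (hF'c.comp (Continuous.prodMk_right t₀)).aestronglyMeasurable
    (ae_of_all _ fun x t ht => hC t ht x) (integrable_inv_one_add_sq.const_mul C)
    (ae_of_all _ fun x t _ => hderiv t x)).2

noncomputable def momentumDensity (g : ℝ × ℝ → ℂ) (q : ℝ × ℝ) : ℝ :=
  (starRingEnd ℂ (g q) * pdx g q).im + (1 / 2) * (starRingEnd ℂ (g q) * g q).re ^ 2

noncomputable def momentumDensityDt (g : ℝ × ℝ → ℂ) (q : ℝ × ℝ) : ℝ :=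
  (starRingEnd ℂ (pdt g q) * pdx g q + starRingEnd ℂ (g q) * pdt (pdx g) q).im
    + (starRingEnd ℂ (g q) * g q).re
      * (starRingEnd ℂ (pdt g q) * g q + starRingEnd ℂ (g q) * pdt g q).re

noncomputable def momentumFlux (g : ℝ × ℝ → ℂ) (q : ℝ × ℝ) : ℝ :=
  (starRingEnd ℂ (g q) * pdx (pdx g) q).re - (starRingEnd ℂ (pdx g q) * pdx g q).re
    - 3 * (starRingEnd ℂ (g q) * g q).re * (starRingEnd ℂ (g q) * pdx g q).im
    - (starRingEnd ℂ (g q) * g q).re ^ 3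

section Densities

variable {g : ℝ × ℝ → ℂ}

theorem hasDerivAt_momentumDensity (hg : ContDiff ℝ ∞ g) (t x : ℝ) :
    HasDerivAt (fun s => momentumDensity g (s, x)) (momentumDensityDt g (t, x)) t := by
  have hu := hasDerivAt_pdt (hg.differentiable (by simp)) t x
  have hux := hasDerivAt_pdt ((contDiff_pdx hg).differentiable (by simp)) t x
  have H := (hu.complexConj.mul hux).complexIm.add
    ((((hu.complexConj.mul hu).complexRe).pow 2).const_mul (1 / 2 : ℝ))
  refine H.congr_deriv ?_
  simp only [momentumDensityDt, Pi.mul_apply]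
  ring

theorem continuous_momentumDensity (hg : ContDiff ℝ ∞ g) : Continuous (momentumDensity g) := by
  have := hg.continuous
  have := (contDiff_pdx hg).continuous
  unfold momentumDensity
  fun_prop

theorem continuous_momentumDensityDt (hg : ContDiff ℝ ∞ g) :
    Continuous (momentumDensityDt g) := by
  have := hg.continuous
  have := (contDiff_pdx hg).continuous
  have := (contDiff_pdt hg).continuous
  have := (contDiff_pdt (contDiff_pdx hg)).continuous
  unfold momentumDensityDt
  fun_prop

theorem invSqDecay_momentumDensity (h₀ : InvSqDecay g) (h₁ : InvSqDecay (pdx g)) :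
    InvSqDecay (momentumDensity g) :=
  (h₀.conj.mul h₁).im.add (((h₀.conj.mul h₀).re.pow two_ne_zero).const_mul _)

theorem invSqDecay_momentumDensityDt (h₀ : InvSqDecay g) (h₁ : InvSqDecay (pdx g))
    (hₜ : InvSqDecay (pdt g)) (hₜ₁ : InvSqDecay (pdt (pdx g))) :
    InvSqDecay (momentumDensityDt g) :=
  ((hₜ.conj.mul h₁).add (h₀.conj.mul hₜ₁)).im.add
    ((h₀.conj.mul h₀).re.mul ((hₜ.conj.mul h₀).add (h₀.conj.mul hₜ)).re)

theorem invSqDecay_momentumFlux (h₀ : InvSqDecay g) (h₁ : InvSqDecay (pdx g))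
    (h₂ : InvSqDecay (pdx (pdx g))) : InvSqDecay (momentumFlux g) :=
  ((((h₀.conj.mul h₂).re.sub (h₁.conj.mul h₁).re)).sub
    (((h₀.conj.mul h₀).re.const_mul 3).mul (h₀.conj.mul h₁).im)).sub
    ((h₀.conj.mul h₀).re.pow three_ne_zero)

end Densities

theorem norm_pow_four_eq (z : ℂ) : ‖z‖ ^ 4 = (starRingEnd ℂ z * z).re ^ 2 := by
  rw [← normSq_eq_conj_mul_self, ofReal_re, normSq_eq_norm_sq]
  ring

theorem momentum_eq_integral_momentumDensity {g : ℝ × ℝ → ℂ} (hg : ContDiff ℝ ∞ g)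
    (h₀ : InvSqDecay g) (h₁ : InvSqDecay (pdx g)) (t : ℝ) :
    momentum (fun x => g (t, x)) = ∫ x, momentumDensity g (t, x) := by
  have hc := hg.continuous
  have hc₁ := (contDiff_pdx hg).continuous
  have hderiv : deriv (fun x => g (t, x)) = fun x => pdx g (t, x) := by
    simpa using iteratedDeriv_slice_x hg 1 t
  have hint₁ := (h₀.conj.mul h₁).integrable (by fun_prop) t
  have hint₁' := (h₀.conj.mul h₁).im.integrable (by fun_prop) t
  have hint₂ := ((h₀.conj.mul h₀).re.pow two_ne_zero).integrable (by fun_prop) t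
  simp only [momentum, momentumDensity, hderiv, norm_pow_four_eq]
  rw [integral_add hint₁' (hint₂.const_mul _), integral_const_mul]
  congr 1
  exact (integral_im hint₁).symm

end DNLS

namespace IsDNLSSolution

open DNLS

variable {u : ℝ → ℝ → ℂ}

theorem contDiff (hu : IsDNLSSolution u) : ContDiff ℝ ∞ (uncurry u) := hu.1

theorem invSqDecay (hu : IsDNLSSolution u) (i j : ℕ) :
    InvSqDecay (pdt^[i] (pdx^[j] (uncurry u))) := by
  intro K hK
  obtain ⟨C₀, hC₀⟩ := hu.2.2.1 i j 0 K hK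
  obtain ⟨C₂, hC₂⟩ := hu.2.2.1 i j 2 K hK
  refine ⟨C₀ + C₂, fun t ht x => ?_⟩
  have hslice : iteratedDeriv i (fun s => iteratedDeriv j (fun y => u s y) x) t
      = pdt^[i] (pdx^[j] (uncurry u)) (t, x) := iteratedDeriv_slice hu.contDiff i j t x
  have h₀ := hC₀ t ht x
  have h₂ := hC₂ t ht x
  rw [hslice, pow_zero, one_mul] at h₀
  rw [hslice, sq_abs] at h₂
  rw [← div_eq_mul_inv, le_div_iff₀ (by positivity)]
  nlinarith

theorem pdt_eq (hu : IsDNLSSolution u) (q : ℝ × ℝ) :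
    pdt (uncurry u) q = I * pdx (pdx (uncurry u)) q
      - (starRingEnd ℂ (pdx (uncurry u) q) * uncurry u q ^ 2
        + 2 * starRingEnd ℂ (uncurry u q) * uncurry u q * pdx (uncurry u) q) := by
  obtain ⟨t, x⟩ := q
  have hd := hu.contDiff.differentiable (by simp)
  have hd₁ := (contDiff_pdx hu.contDiff).differentiable (by simp)
  have hux (y : ℝ) : HasDerivAt (u t) (pdx (uncurry u) (t, y)) y := hasDerivAt_pdx hd t y
  have hpde := hu.2.2.2 t x
  have hnonlin : (fun y => (‖u t y‖ : ℂ) ^ 2 * u t y)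
      = fun y => starRingEnd ℂ (u t y) * u t y * u t y := by
    funext y
    rw [RCLike.conj_mul]
    norm_cast
  have hnonlin_deriv : HasDerivAt (fun y => starRingEnd ℂ (u t y) * u t y * u t y)
      ((starRingEnd ℂ (pdx (uncurry u) (t, x)) * u t x
        + starRingEnd ℂ (u t x) * pdx (uncurry u) (t, x)) * u t x
        + starRingEnd ℂ (u t x) * u t x * pdx (uncurry u) (t, x)) x :=
    ((hux x).complexConj.mul (hux x)).mul (hux x)
  have hut : HasDerivAt (fun s => u s x) (pdt (uncurry u) (t, x)) t := hasDerivAt_pdt hd t x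
  rw [hut.deriv, funext fun y => (hux y).deriv, (hasDerivAt_pdx hd₁ t x).deriv, hnonlin,
    hnonlin_deriv.deriv] at hpde
  simp only [uncurry_apply_pair] at hpde ⊢
  linear_combination (-I) * hpde + (pdt (uncurry u) (t, x)
    + (starRingEnd ℂ (pdx (uncurry u) (t, x)) * u t x ^ 2
      + 2 * starRingEnd ℂ (u t x) * u t x * pdx (uncurry u) (t, x))) * I_mul_I

theorem pdt_pdx_eq (hu : IsDNLSSolution u) (q : ℝ × ℝ) :
    pdt (pdx (uncurry u)) q = I * pdx (pdx (pdx (uncurry u))) q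
      - (starRingEnd ℂ (pdx (pdx (uncurry u)) q) * uncurry u q ^ 2
        + 4 * starRingEnd ℂ (pdx (uncurry u) q) * uncurry u q * pdx (uncurry u) q
        + 2 * starRingEnd ℂ (uncurry u q) * pdx (uncurry u) q ^ 2
        + 2 * starRingEnd ℂ (uncurry u q) * uncurry u q * pdx (pdx (uncurry u)) q) := by
  obtain ⟨t, x⟩ := q
  have hx (j : ℕ) :=
    hasDerivAt_pdx ((contDiff_iterate_pdx hu.contDiff j).differentiable (by simp)) t x
  have hx₀ : HasDerivAt (fun y => uncurry u (t, y)) (pdx (uncurry u) (t, x)) x := hx 0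
  have hx₁ : HasDerivAt (fun y => pdx (uncurry u) (t, y)) (pdx (pdx (uncurry u)) (t, x)) x :=
    hx 1
  have hx₂ : HasDerivAt (fun y => pdx (pdx (uncurry u)) (t, y))
      (pdx (pdx (pdx (uncurry u))) (t, x)) x := hx 2
  have hrhs := (hx₂.const_mul I).sub ((hx₁.complexConj.mul (hx₀.pow 2)).add
    (((hx₀.complexConj.const_mul 2).mul hx₀).mul hx₁))
  have hpdt := hasDerivAt_pdx ((contDiff_pdt hu.contDiff).differentiable (by simp)) t x
  simp only [hu.pdt_eq] at hpdt
  rw [← pdx_pdt_comm hu.contDiff, hpdt.unique hrhs]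
  simp only [uncurry_apply_pair, Pi.pow_apply, Pi.mul_apply, Nat.cast_ofNat, Nat.add_one_sub_one,
    pow_one]
  ring

theorem hasDerivAt_momentumFlux (hu : IsDNLSSolution u) (t x : ℝ) :
    HasDerivAt (fun y => momentumFlux (uncurry u) (t, y))
      (momentumDensityDt (uncurry u) (t, x)) x := by
  have hx (j : ℕ) :=
    hasDerivAt_pdx ((contDiff_iterate_pdx hu.contDiff j).differentiable (by simp)) t x
  have hx₀ : HasDerivAt (fun y => uncurry u (t, y)) (pdx (uncurry u) (t, x)) x := hx 0
  have hx₁ : HasDerivAt (fun y => pdx (uncurry u) (t, y)) (pdx (pdx (uncurry u)) (t, x)) x :=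
    hx 1
  have hx₂ : HasDerivAt (fun y => pdx (pdx (uncurry u)) (t, y))
      (pdx (pdx (pdx (uncurry u))) (t, x)) x := hx 2
  have hsq := (hx₀.complexConj.mul hx₀).complexRe
  have hflux := (((hx₀.complexConj.mul hx₂).complexRe.sub (hx₁.complexConj.mul hx₁).complexRe).sub
    ((hsq.const_mul 3).mul (hx₀.complexConj.mul hx₁).complexIm)).sub (hsq.pow 3)
  refine hflux.congr_deriv ?_
  rw [momentumDensityDt, hu.pdt_eq, hu.pdt_pdx_eq]
  simp only [Pi.mul_apply, Nat.cast_ofNat, Nat.reduceSub]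
  generalize uncurry u (t, x) = a, pdx (uncurry u) (t, x) = b,
    pdx (pdx (uncurry u)) (t, x) = c, pdx (pdx (pdx (uncurry u))) (t, x) = d
  simp only [pow_succ, pow_zero, one_mul, mul_re, mul_im, add_re, add_im, sub_re, sub_im,
    conj_re, conj_im, I_re, I_im, re_ofNat, im_ofNat]
  ring

end IsDNLSSolution

open DNLS

/-- Conservation of momentum for DNLS: `P(u(t))` is independent of time. -/
theorem dnls_momentum_conservation (u : ℝ → ℝ → ℂ) (hu : IsDNLSSolution u) (t₁ t₂ : ℝ) :
    momentum (u t₁) = momentum (u t₂) := by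
  have hf := hu.contDiff
  have h₀ : InvSqDecay (uncurry u) := hu.invSqDecay 0 0
  have h₁ : InvSqDecay (pdx (uncurry u)) := hu.invSqDecay 0 1
  have h₂ : InvSqDecay (pdx (pdx (uncurry u))) := hu.invSqDecay 0 2
  have hₜ : InvSqDecay (pdt (uncurry u)) := hu.invSqDecay 1 0
  have hₜ₁ : InvSqDecay (pdt (pdx (uncurry u))) := hu.invSqDecay 1 1
  have hρ (t : ℝ) : momentum (u t) = ∫ x, momentumDensity (uncurry u) (t, x) :=
    momentum_eq_integral_momentumDensity hf h₀ h₁ t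
  have hρt := invSqDecay_momentumDensityDt h₀ h₁ hₜ hₜ₁
  have hflux := invSqDecay_momentumFlux h₀ h₁ h₂
  have hderiv (t : ℝ) : HasDerivAt (fun s => momentum (u s)) 0 t := by
    have hleibniz := hasDerivAt_integral_of_invSqDecay
      (invSqDecay_momentumDensity h₀ h₁) hρt (continuous_momentumDensity hf)
      (continuous_momentumDensityDt hf) (hasDerivAt_momentumDensity hf) t
    have hzero : ∫ x, momentumDensityDt (uncurry u) (t, x) = 0 := by
      simpa using integral_of_hasDerivAt_of_tendsto (hu.hasDerivAt_momentumFlux t)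
        (hρt.integrable (continuous_momentumDensityDt hf) t)
        ((hflux.tendsto_cocompact t).mono_left atBot_le_cocompact)
        ((hflux.tendsto_cocompact t).mono_left atTop_le_cocompact)
    simpa only [hρ, hzero] using hleibniz
  exact is_const_of_deriv_eq_zero (fun t => (hderiv t).differentiableAt)
    (fun t => (hderiv t).deriv) t₁ t₂
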